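/- Work in the Clifford algebra Cl(4,1) of ℝ⁵ with the quadratic form Q(x) = x₁² + x₂² + x₃² + x₄² − x₅², with canonical embedding ι : ℝ⁵ → Cl(4,1). Embed ℝ³ into ℝ⁵ as the first three coordinates, set e = e₄, ē = e₅, n = e + ē, n̄ = e − ē, fix a real number λ ≠ 0, and define the conformal embedding F(x) = |x|²·ι(n) + 2λ·ι(x) − λ²·ι(n̄) for x ∈ ℝ³. Then for every unit vector x ∈ ℝ³ (|x| = 1) and every y ∈ ℝ³, one has −ι(x)·F(y)·ι(x) = F(y − 2⟨x,y⟩x); that is, conjugation by ι(x) implements the Euclidean reflection in the hyperplane orthogonal to x on conformal representatives. -/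

import Mathlib

/-!
In a Clifford algebra `-(a v a) = Q(a) v - B(a, v) a` for vectors `a`, `v`; when `Q(a) = 1` this
is the reflection of `v` in `a⊥`. Since `F(y)` is itself the image
of the vector `|y|² n + 2λ y - λ² n̄`, and `n`, `n̄` are orthogonal to `ℝ³`, the reflection fixes
the `n`, `n̄` components and reflects `y`; as the Euclidean reflection preserves `|y|²`, the
result is `F` of the reflected point.
-/

noncomputable section

/-- The quadratic form of signature `(4,1)` on ℝ⁵:
`Q(x) = x₁² + x₂² + x₃² + x₄² − x₅²`. -/
def Q41 : QuadraticForm ℝ (Fin 5 → ℝ) :=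
  QuadraticMap.weightedSumSquares ℝ (![1, 1, 1, 1, -1] : Fin 5 → ℝ)

/-- The conformal Clifford algebra `Cl(4,1)`. -/
abbrev Cl41 : Type := CliffordAlgebra Q41

/-- The canonical embedding `ι : ℝ⁵ → Cl(4,1)`, satisfying `ι(v)² = Q(v)·1`. -/
def ι41 : (Fin 5 → ℝ) →ₗ[ℝ] Cl41 := CliffordAlgebra.ι Q41

/-- The embedding of ℝ³ into ℝ⁵ as the first three coordinates. -/
def emb3 (x : Fin 3 → ℝ) : Fin 5 → ℝ := ![x 0, x 1, x 2, 0, 0]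

/-- The null vector `n = e₄ + e₅`. -/
def nVec : Fin 5 → ℝ := ![0, 0, 0, 1, 1]

/-- The null vector `n̄ = e₄ − e₅`. -/
def nBar : Fin 5 → ℝ := ![0, 0, 0, 1, -1]

/-- The conformal embedding `F(x) = |x|²·ι(n) + 2λ·ι(x) − λ²·ι(n̄)` of ℝ³
into the null cone of `Cl(4,1)`, for a fixed scale `lam = λ`. -/
def confF (lam : ℝ) (x : Fin 3 → ℝ) : Cl41 :=
  (∑ i, x i ^ 2) • ι41 nVec + (2 * lam) • ι41 (emb3 x) - lam ^ 2 • ι41 nBar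

def conformalVec (lam : ℝ) (x : Fin 3 → ℝ) : Fin 5 → ℝ :=
  (∑ i, x i ^ 2) • nVec + (2 * lam) • emb3 x - lam ^ 2 • nBar

theorem confF_eq_ι41_conformalVec (lam : ℝ) (x : Fin 3 → ℝ) :
    confF lam x = ι41 (conformalVec lam x) := by
  simp only [confF, conformalVec, map_sub, map_add, map_smul]

theorem neg_ι_mul_ι_mul_ι {R M : Type*} [CommRing R] [AddCommGroup M] [Module R M]
    {Q : QuadraticForm R M} (a b : M) :
    -(CliffordAlgebra.ι Q a * CliffordAlgebra.ι Q b * CliffordAlgebra.ι Q a)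
      = CliffordAlgebra.ι Q (Q a • b - QuadraticMap.polar Q a b • a) := by
  rw [CliffordAlgebra.ι_mul_ι_mul_ι, ← map_neg, neg_sub]

theorem sum_sq_sub_two_mul_dot_smul {ι : Type*} [Fintype ι] {x : ι → ℝ}
    (hx : ∑ i, x i ^ 2 = 1) (y : ι → ℝ) :
    ∑ i, (y - (2 * ∑ j, x j * y j) • x) i ^ 2 = ∑ i, y i ^ 2 := by
  have expand (c : ℝ) (i : ι) :
      (y - c • x) i ^ 2 = y i ^ 2 - c * (2 * (x i * y i)) + c ^ 2 * x i ^ 2 := by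
    simp only [Pi.sub_apply, Pi.smul_apply, smul_eq_mul]
    ring
  simp only [expand, Finset.sum_add_distrib, Finset.sum_sub_distrib, ← Finset.mul_sum, hx]
  ring

theorem polar_Q41 (u v : Fin 5 → ℝ) :
    QuadraticMap.polar Q41 u v =
      2 * (u 0 * v 0 + u 1 * v 1 + u 2 * v 2 + u 3 * v 3 - u 4 * v 4) := by
  simp only [QuadraticMap.polar, Q41, QuadraticMap.weightedSumSquares_apply, Pi.add_apply,
    smul_eq_mul, Fin.sum_univ_five, Matrix.cons_val_zero, Matrix.cons_val_one, Matrix.cons_val]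
  ring

theorem Q41_emb3 (x : Fin 3 → ℝ) : Q41 (emb3 x) = ∑ i, x i ^ 2 := by
  simp [Q41, QuadraticMap.weightedSumSquares_apply, Fin.sum_univ_five, Fin.sum_univ_three, emb3,
    sq]

theorem polar_Q41_emb3_conformalVec (lam : ℝ) (x y : Fin 3 → ℝ) :
    QuadraticMap.polar Q41 (emb3 x) (conformalVec lam y) = 2 * lam * (2 * ∑ i, x i * y i) := by
  simp only [polar_Q41, conformalVec, emb3, nVec, nBar, Fin.sum_univ_three, Pi.add_apply,
    Pi.sub_apply, Pi.smul_apply, smul_eq_mul, Matrix.cons_val_zero, Matrix.cons_val_one,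
    Matrix.cons_val]
  ring

theorem emb3_sub_smul (y : Fin 3 → ℝ) (c : ℝ) (x : Fin 3 → ℝ) :
    emb3 (y - c • x) = emb3 y - c • emb3 x := by
  funext i
  fin_cases i <;> simp [emb3]

theorem conformal_reflection_general (lam : ℝ)
    (x : Fin 3 → ℝ) (hx : ∑ i, x i ^ 2 = 1) (y : Fin 3 → ℝ) :
    -(ι41 (emb3 x) * confF lam y * ι41 (emb3 x))
      = confF lam (y - (2 * ∑ i, x i * y i) • x) := by
  rw [confF_eq_ι41_conformalVec, confF_eq_ι41_conformalVec, ι41, neg_ι_mul_ι_mul_ι,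
    Q41_emb3, hx, one_smul, polar_Q41_emb3_conformalVec]
  congr 1
  rw [conformalVec, conformalVec, sum_sq_sub_two_mul_dot_smul hx, emb3_sub_smul]
  module

/-- In `Cl(4,1)`, for every unit vector `x ∈ ℝ³` and every `y ∈ ℝ³`,
`−ι(x)·F(y)·ι(x) = F(y − 2⟨x,y⟩x)`: conjugation by `ι(x)` implements the
Euclidean reflection in the hyperplane orthogonal to `x` on conformal
representatives. -/
theorem conformal_reflection (lam : ℝ) (hlam : lam ≠ 0)
    (x : Fin 3 → ℝ) (hx : ∑ i, x i ^ 2 = 1) (y : Fin 3 → ℝ) :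
    -(ι41 (emb3 x) * confF lam y * ι41 (emb3 x))
      = confF lam (y - (2 * ∑ i, x i * y i) • x) :=
  conformal_reflection_general lam x hx y
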